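/- For p = 2 and n ≥ 2, the reduction map GL_4(ℤ/2^n) → GL_4(ℤ/2) does not admit a group-homomorphism section. -/

import Mathlib

/-- Entrywise reduction modulo `p` on invertible matrices over `ℤ/pⁿ`. -/
def red (p n r : ℕ) (hn : 1 ≤ n) :
    GL (Fin r) (ZMod (p ^ n)) →* GL (Fin r) (ZMod p) :=
  Units.map ((ZMod.castHom (dvd_pow_self p (by omega)) (ZMod p)).mapMatrix).toMonoidHom

open Matrix

namespace Stmt15Aux

/-- A commuting pair of involutions in `GL₄(𝔽₂)` witnessing non-splitting. -/
def aM : Matrix (Fin 4) (Fin 4) (ZMod 2) := !![0,0,0,1; 0,0,1,0; 0,1,0,0; 1,0,0,0]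
def bM : Matrix (Fin 4) (Fin 4) (ZMod 2) := !![0,1,1,1; 1,1,0,1; 1,0,1,1; 1,1,1,0]

/-- The canonical `0/1` lifts to `ℤ/4`. -/
def A0 : Matrix (Fin 4) (Fin 4) (ZMod 4) := !![0,0,0,1; 0,0,1,0; 0,1,0,0; 1,0,0,0]
def B0 : Matrix (Fin 4) (Fin 4) (ZMod 4) := !![0,1,1,1; 1,1,0,1; 1,0,1,1; 1,1,1,0]

/-- Certificate matrices: a linear functional on the relation equations that is
identically `2` on all lifts. -/
def Pc : Matrix (Fin 4) (Fin 4) (ZMod 4) := !![1,1,0,0; 1,0,0,0; 0,0,0,0; 0,0,0,0]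
def Qc : Matrix (Fin 4) (Fin 4) (ZMod 4) := !![0,1,0,0; 1,1,0,0; 0,0,0,0; 0,0,0,0]
def Rc : Matrix (Fin 4) (Fin 4) (ZMod 4) := !![1,0,0,0; 0,1,0,0; 0,0,0,0; 0,0,0,0]
def Mc : Matrix (Fin 4) (Fin 4) (ZMod 4) := !![0,0,0,0; 0,0,0,0; 1,0,0,0; 1,1,0,0]
def Nc : Matrix (Fin 4) (Fin 4) (ZMod 4) := !![1,1,0,1; 1,0,1,1; 0,0,0,0; 0,1,0,0]

theorem h24 : (2:ℕ) ∣ 4 := by norm_num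

def aU : GL (Fin 4) (ZMod 2) := ⟨aM, aM, by decide, by decide⟩
def bU : GL (Fin 4) (ZMod 2) := ⟨bM, bM, by decide, by decide⟩

theorem key (X Y : Matrix (Fin 4) (Fin 4) (ZMod 4)) :
    trace (Pc * ((A0+(2:ZMod 4)•X)*(A0+(2:ZMod 4)•X) - 1))
    + trace (Qc * ((B0+(2:ZMod 4)•Y)*(B0+(2:ZMod 4)•Y) - 1))
    + trace (Rc * ((A0+(2:ZMod 4)•X)*(B0+(2:ZMod 4)•Y) - (B0+(2:ZMod 4)•Y)*(A0+(2:ZMod 4)•X)))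
    = 2 := by
  have h22 : (2:ZMod 4) * 2 = 0 := by decide
  have hlinX : trace (Pc*(X*A0)) + trace (Pc*(A0*X)) + trace (Rc*(X*B0)) - trace (Rc*(B0*X))
      = 2 * trace (Mc*X) := by
    have t1 : trace (Pc*(A0*X)) = trace ((Pc*A0)*X) := by rw [mul_assoc]
    have t2 : trace (Pc*(X*A0)) = trace ((A0*Pc)*X) := by
      rw [← mul_assoc, trace_mul_comm, ← mul_assoc]
    have t3 : trace (Rc*(X*B0)) = trace ((B0*Rc)*X) := by
      rw [← mul_assoc, trace_mul_comm, ← mul_assoc]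
    have t4 : trace (Rc*(B0*X)) = trace ((Rc*B0)*X) := by rw [mul_assoc]
    rw [t1, t2, t3, t4]
    have e2 : Pc*A0 + A0*Pc + B0*Rc - Rc*B0 = (2 : ZMod 4) • Mc := by decide
    calc trace ((A0*Pc)*X) + trace ((Pc*A0)*X) + trace ((B0*Rc)*X) - trace ((Rc*B0)*X)
        = trace ((Pc*A0 + A0*Pc + B0*Rc - Rc*B0) * X) := by
          simp only [add_mul, sub_mul, trace_add, trace_sub]; ring
      _ = 2 * trace (Mc*X) := by rw [e2, smul_mul_assoc, trace_smul, smul_eq_mul]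
  have hlinY : trace (Qc*(Y*B0)) + trace (Qc*(B0*Y)) + trace (Rc*(A0*Y)) - trace (Rc*(Y*A0))
      = 2 * trace (Nc*Y) := by
    have t1 : trace (Qc*(B0*Y)) = trace ((Qc*B0)*Y) := by rw [mul_assoc]
    have t2 : trace (Qc*(Y*B0)) = trace ((B0*Qc)*Y) := by
      rw [← mul_assoc, trace_mul_comm, ← mul_assoc]
    have t3 : trace (Rc*(A0*Y)) = trace ((Rc*A0)*Y) := by rw [mul_assoc]
    have t4 : trace (Rc*(Y*A0)) = trace ((A0*Rc)*Y) := by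
      rw [← mul_assoc, trace_mul_comm, ← mul_assoc]
    rw [t1, t2, t3, t4]
    have e3 : Qc*B0 + B0*Qc + Rc*A0 - A0*Rc = (2 : ZMod 4) • Nc := by decide
    calc trace ((B0*Qc)*Y) + trace ((Qc*B0)*Y) + trace ((Rc*A0)*Y) - trace ((A0*Rc)*Y)
        = trace ((Qc*B0 + B0*Qc + Rc*A0 - A0*Rc) * Y) := by
          simp only [add_mul, sub_mul, trace_add, trace_sub]; ring
      _ = 2 * trace (Nc*Y) := by rw [e3, smul_mul_assoc, trace_smul, smul_eq_mul]
  have econst : trace (Pc*(A0*A0)) - trace Pc + trace (Qc*(B0*B0)) - trace Qc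
      + trace (Rc*(A0*B0)) - trace (Rc*(B0*A0)) = 2 := by decide
  simp only [mul_add, add_mul, mul_sub, sub_mul, smul_mul_assoc, mul_smul_comm, smul_smul,
    zero_smul, add_zero, zero_add, mul_one, one_mul, trace_add, trace_sub, trace_smul,
    smul_eq_mul]
  linear_combination econst + 2*hlinX + 2*hlinY +
    (trace (Mc*X) + trace (Nc*Y) + trace (Pc*(X*X)) + trace (Qc*(Y*Y))
      + trace (Rc*(X*Y)) - trace (Rc*(Y*X))) * h22

end Stmt15Aux

open Stmt15Aux in
/-- For `p = 2` and `n ≥ 2`, the reduction map `GL₄(ℤ/2ⁿ) → GL₄(ℤ/2)` admits no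
group-homomorphism section. -/
theorem stmt15 (n : ℕ) (hn : 2 ≤ n) :
    ¬ ∃ s : GL (Fin 4) (ZMod 2) →* GL (Fin 4) (ZMod (2 ^ n)),
        (red 2 n 4 (by omega)).comp s = MonoidHom.id (GL (Fin 4) (ZMod 2)) := by
  rintro ⟨s, hs⟩
  have h4n : (4:ℕ) ∣ 2^n := by
    calc (4:ℕ) = 2^2 := by norm_num
    _ ∣ 2^n := pow_dvd_pow 2 hn
  set π : GL (Fin 4) (ZMod (2^n)) →* GL (Fin 4) (ZMod 4) :=
    Units.map ((ZMod.castHom h4n (ZMod 4)).mapMatrix).toMonoidHom with hπ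
  set A : Matrix (Fin 4) (Fin 4) (ZMod 4) := (π (s aU) : Matrix (Fin 4) (Fin 4) (ZMod 4)) with hA
  set B : Matrix (Fin 4) (Fin 4) (ZMod 4) := (π (s bU) : Matrix (Fin 4) (Fin 4) (ZMod 4)) with hB
  -- group identities
  have ha : aU * aU = 1 := Units.ext (by decide)
  have hb : bU * bU = 1 := Units.ext (by decide)
  have hab : aU * bU = bU * aU := Units.ext (by decide)
  have hA2 : A * A = 1 := by
    have h : π (s aU) * π (s aU) = 1 := by
      rw [← _root_.map_mul, ← _root_.map_mul, ha, _root_.map_one, _root_.map_one]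
    simpa [hA] using congrArg Units.val h
  have hB2 : B * B = 1 := by
    have h : π (s bU) * π (s bU) = 1 := by
      rw [← _root_.map_mul, ← _root_.map_mul, hb, _root_.map_one, _root_.map_one]
    simpa [hB] using congrArg Units.val h
  have hAB : A * B = B * A := by
    have h : π (s aU) * π (s bU) = π (s bU) * π (s aU) := by
      rw [← _root_.map_mul, ← _root_.map_mul, ← _root_.map_mul, ← _root_.map_mul, hab]
    simpa [hA, hB] using congrArg Units.val h
  -- reduction identities
  have hsa : (red 2 n 4 (by omega)) (s aU) = aU := by
    have := DFunLike.congr_fun hs aU; simpa using this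
  have hsb : (red 2 n 4 (by omega)) (s bU) = bU := by
    have := DFunLike.congr_fun hs bU; simpa using this
  have hAmap : A.map (ZMod.castHom h24 (ZMod 2)) = aM := by
    have h1 : ((s aU : Matrix (Fin 4) (Fin 4) (ZMod (2^n)))).map
        (ZMod.castHom (dvd_pow_self 2 (by omega : n ≠ 0)) (ZMod 2)) = aM := by
      have := congrArg Units.val hsa
      simpa [red, aU] using this
    show (((s aU : Matrix (Fin 4) (Fin 4) (ZMod (2^n)))).map
        (ZMod.castHom h4n (ZMod 4))).map (ZMod.castHom h24 (ZMod 2)) = aM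
    rw [Matrix.map_map]
    have hcomp : (⇑(ZMod.castHom h24 (ZMod 2)) ∘ ⇑(ZMod.castHom h4n (ZMod 4)))
        = ⇑(ZMod.castHom (dvd_pow_self 2 (by omega : n ≠ 0)) (ZMod 2)) := by
      rw [← RingHom.coe_comp, ZMod.castHom_comp]
    rw [hcomp]; exact h1
  have hBmap : B.map (ZMod.castHom h24 (ZMod 2)) = bM := by
    have h1 : ((s bU : Matrix (Fin 4) (Fin 4) (ZMod (2^n)))).map
        (ZMod.castHom (dvd_pow_self 2 (by omega : n ≠ 0)) (ZMod 2)) = bM := by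
      have := congrArg Units.val hsb
      simpa [red, bU] using this
    show (((s bU : Matrix (Fin 4) (Fin 4) (ZMod (2^n)))).map
        (ZMod.castHom h4n (ZMod 4))).map (ZMod.castHom h24 (ZMod 2)) = bM
    rw [Matrix.map_map]
    have hcomp : (⇑(ZMod.castHom h24 (ZMod 2)) ∘ ⇑(ZMod.castHom h4n (ZMod 4)))
        = ⇑(ZMod.castHom (dvd_pow_self 2 (by omega : n ≠ 0)) (ZMod 2)) := by
      rw [← RingHom.coe_comp, ZMod.castHom_comp]
    rw [hcomp]; exact h1
  -- decompose the lifts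
  have hdec : ∀ (x c : ZMod 4), ZMod.castHom h24 (ZMod 2) x = ZMod.castHom h24 (ZMod 2) c →
      ∃ y, x = c + 2*y := by decide
  have hA0map : A0.map (ZMod.castHom h24 (ZMod 2)) = aM := by decide
  have hB0map : B0.map (ZMod.castHom h24 (ZMod 2)) = bM := by decide
  have hx : ∀ i j, ∃ y, A i j = A0 i j + 2*y := by
    intro i j
    refine hdec _ _ ?_
    have h1 : (A.map (ZMod.castHom h24 (ZMod 2))) i j = aM i j := by rw [hAmap]
    have h2 : (A0.map (ZMod.castHom h24 (ZMod 2))) i j = aM i j := by rw [hA0map]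
    rw [Matrix.map_apply] at h1 h2
    rw [h1, h2]
  have hy : ∀ i j, ∃ y, B i j = B0 i j + 2*y := by
    intro i j
    refine hdec _ _ ?_
    have h1 : (B.map (ZMod.castHom h24 (ZMod 2))) i j = bM i j := by rw [hBmap]
    have h2 : (B0.map (ZMod.castHom h24 (ZMod 2))) i j = bM i j := by rw [hB0map]
    rw [Matrix.map_apply] at h1 h2
    rw [h1, h2]
  choose X hX using hx
  choose Y hY using hy
  have hAdec : A = A0 + (2:ZMod 4) • Matrix.of X := by
    ext i j
    simp only [Matrix.add_apply, Matrix.smul_apply, Matrix.of_apply, smul_eq_mul]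
    exact hX i j
  have hBdec : B = B0 + (2:ZMod 4) • Matrix.of Y := by
    ext i j
    simp only [Matrix.add_apply, Matrix.smul_apply, Matrix.of_apply, smul_eq_mul]
    exact hY i j
  -- contradiction via the certificate
  have h2 := key (Matrix.of X) (Matrix.of Y)
  rw [← hAdec, ← hBdec, hA2, hB2, hAB] at h2
  simp only [sub_self, Matrix.mul_zero, trace_zero, add_zero] at h2
  exact absurd h2 (by decide)
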